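/- arXiv:2108.03236 — 4 statements merged into one kernel-verified Lean document; each statement's English description precedes it below -/
import Mathlib

section
/- Suppose two finite multisets of EVs have identical laxity-group counts n^{(ℓ)} for all ℓ ∈ {0, …, L}. If the same total budget a is applied via any rule that charges EVs in order of increasing laxity (ties arbitrary) and no arrivals/departures occur, then after one transition the resulting laxity-group counts of the two systems are again identical for all ℓ. -/
open Finset in
/-- Cumulative charged count equals `min a` (cumulative count). -/
lemma charged_cumul_min {ι : Type*} [Fintype ι] [DecidableEq ι]
    (lax : ι → ℕ) (ch : ι → Bool) (a : ℕ)
    (hbud : (univ.filter fun i => ch i = true).card = a)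
    (hord : ∀ i i', ch i = false → ch i' = true → lax i' ≤ lax i) (k : ℕ) :
    (univ.filter fun i => ch i = true ∧ lax i ≤ k).card
      = min a (univ.filter fun i => lax i ≤ k).card := by
  by_cases h : ∃ i, ch i = false ∧ lax i ≤ k
  · obtain ⟨i, hi, hik⟩ := h
    have h1 : (univ.filter fun j => ch j = true ∧ lax j ≤ k)
        = univ.filter fun j => ch j = true := by
      ext j
      simp only [mem_filter, mem_univ, true_and]
      exact ⟨fun hj => hj.1, fun hj => ⟨hj, le_trans (hord i j hi hj) hik⟩⟩
    have h2 : a ≤ (univ.filter fun j => lax j ≤ k).card := by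
      rw [← hbud]
      apply card_le_card
      intro j hj
      simp only [mem_filter, mem_univ, true_and] at hj ⊢
      exact le_trans (hord i j hi hj) hik
    rw [h1, hbud, min_eq_left h2]
  · push_neg at h
    have h1 : (univ.filter fun j => ch j = true ∧ lax j ≤ k)
        = univ.filter fun j => lax j ≤ k := by
      ext j
      simp only [mem_filter, mem_univ, true_and]
      refine ⟨fun hj => hj.2, fun hj => ⟨?_, hj⟩⟩
      cases hc : ch j with
      | false => exact absurd hj (by have := h j hc; omega)
      | true => rfl
    have h2 : (univ.filter fun j => lax j ≤ k).card ≤ a := by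
      rw [← hbud, ← h1]
      apply card_le_card
      intro j hj
      simp only [mem_filter, mem_univ, true_and] at hj ⊢
      exact hj.1
    rw [h1, min_eq_right h2]

open Finset in
/-- dynamic homogeneity of laxity aggregation: two finite systems
of EVs with laxities in `{0,…,L}` and identical laxity-group counts, each
charging exactly `a` EVs by a rule that charges in order of increasing laxity
(if an EV is not charged then no EV with strictly larger laxity is charged),
with laxity kept when charged and decreased by one otherwise, have identical
laxity-group counts after one transition. -/
theorem dynamic_homogeneity
    (ι₁ ι₂ : Type*) [Fintype ι₁] [DecidableEq ι₁] [Fintype ι₂] [DecidableEq ι₂]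
    (L : ℕ) (a : ℕ)
    (lax₁ : ι₁ → ℕ) (lax₂ : ι₂ → ℕ)
    (hL₁ : ∀ i, lax₁ i ≤ L) (hL₂ : ∀ i, lax₂ i ≤ L)
    (hcounts : ∀ ℓ : ℕ,
      (univ.filter fun i => lax₁ i = ℓ).card = (univ.filter fun i => lax₂ i = ℓ).card)
    (ch₁ : ι₁ → Bool) (ch₂ : ι₂ → Bool)
    (hbud₁ : (univ.filter fun i => ch₁ i = true).card = a)
    (hbud₂ : (univ.filter fun i => ch₂ i = true).card = a)
    (hord₁ : ∀ i i', ch₁ i = false → ch₁ i' = true → lax₁ i' ≤ lax₁ i)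
    (hord₂ : ∀ i i', ch₂ i = false → ch₂ i' = true → lax₂ i' ≤ lax₂ i)
    (lax₁' : ι₁ → ℤ) (lax₂' : ι₂ → ℤ)
    (hdyn₁ : ∀ i, lax₁' i = if ch₁ i then (lax₁ i : ℤ) else (lax₁ i : ℤ) - 1)
    (hdyn₂ : ∀ i, lax₂' i = if ch₂ i then (lax₂ i : ℤ) else (lax₂ i : ℤ) - 1) :
    ∀ ℓ : ℤ,
      (univ.filter fun i => lax₁' i = ℓ).card =
        (univ.filter fun i => lax₂' i = ℓ).card := by
  -- cumulative counts agree
  have hC : ∀ k : ℕ, (univ.filter fun i => lax₁ i ≤ k).card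
      = (univ.filter fun i => lax₂ i ≤ k).card := by
    intro k
    induction k with
    | zero => simpa [Nat.le_zero] using hcounts 0
    | succ k ih =>
      have e₁ : (univ.filter fun i => lax₁ i ≤ k + 1)
          = (univ.filter fun i => lax₁ i ≤ k) ∪ (univ.filter fun i => lax₁ i = k + 1) := by
        ext i; simp only [mem_filter, mem_univ, true_and, mem_union]; omega
      have e₂ : (univ.filter fun i => lax₂ i ≤ k + 1)
          = (univ.filter fun i => lax₂ i ≤ k) ∪ (univ.filter fun i => lax₂ i = k + 1) := by
        ext i; simp only [mem_filter, mem_univ, true_and, mem_union]; omega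
      have d₁ : Disjoint (univ.filter fun i => lax₁ i ≤ k)
          (univ.filter fun i => lax₁ i = k + 1) := by
        simp only [disjoint_left, mem_filter, mem_univ, true_and]; omega
      have d₂ : Disjoint (univ.filter fun i => lax₂ i ≤ k)
          (univ.filter fun i => lax₂ i = k + 1) := by
        simp only [disjoint_left, mem_filter, mem_univ, true_and]; omega
      rw [e₁, e₂, card_union_of_disjoint d₁, card_union_of_disjoint d₂, ih, hcounts (k + 1)]
  -- cumulative charged counts agree
  have hF : ∀ k : ℕ, (univ.filter fun i => ch₁ i = true ∧ lax₁ i ≤ k).card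
      = (univ.filter fun i => ch₂ i = true ∧ lax₂ i ≤ k).card := by
    intro k
    rw [charged_cumul_min lax₁ ch₁ a hbud₁ hord₁ k,
        charged_cumul_min lax₂ ch₂ a hbud₂ hord₂ k, hC k]
  -- charged counts per level agree
  have hg : ∀ k : ℕ, (univ.filter fun i => ch₁ i = true ∧ lax₁ i = k).card
      = (univ.filter fun i => ch₂ i = true ∧ lax₂ i = k).card := by
    intro k
    cases k with
    | zero => simpa [Nat.le_zero] using hF 0
    | succ k =>
      have e₁ : (univ.filter fun i => ch₁ i = true ∧ lax₁ i ≤ k + 1)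
          = (univ.filter fun i => ch₁ i = true ∧ lax₁ i ≤ k)
            ∪ (univ.filter fun i => ch₁ i = true ∧ lax₁ i = k + 1) := by
        ext i; simp only [mem_filter, mem_univ, true_and, mem_union]
        constructor
        · rintro ⟨h1, h2⟩; rcases Nat.le_succ_iff.mp h2 with h | h
          · exact Or.inl ⟨h1, h⟩
          · exact Or.inr ⟨h1, h⟩
        · rintro (⟨h1, h2⟩ | ⟨h1, h2⟩) <;> exact ⟨h1, by omega⟩
      have e₂ : (univ.filter fun i => ch₂ i = true ∧ lax₂ i ≤ k + 1)
          = (univ.filter fun i => ch₂ i = true ∧ lax₂ i ≤ k)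
            ∪ (univ.filter fun i => ch₂ i = true ∧ lax₂ i = k + 1) := by
        ext i; simp only [mem_filter, mem_univ, true_and, mem_union]
        constructor
        · rintro ⟨h1, h2⟩; rcases Nat.le_succ_iff.mp h2 with h | h
          · exact Or.inl ⟨h1, h⟩
          · exact Or.inr ⟨h1, h⟩
        · rintro (⟨h1, h2⟩ | ⟨h1, h2⟩) <;> exact ⟨h1, by omega⟩
      have d₁ : Disjoint (univ.filter fun i => ch₁ i = true ∧ lax₁ i ≤ k)
          (univ.filter fun i => ch₁ i = true ∧ lax₁ i = k + 1) := by
        simp only [disjoint_left, mem_filter, mem_univ, true_and]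
        rintro i ⟨_, h2⟩ ⟨_, h3⟩; omega
      have d₂ : Disjoint (univ.filter fun i => ch₂ i = true ∧ lax₂ i ≤ k)
          (univ.filter fun i => ch₂ i = true ∧ lax₂ i = k + 1) := by
        simp only [disjoint_left, mem_filter, mem_univ, true_and]
        rintro i ⟨_, h2⟩ ⟨_, h3⟩; omega
      have t₁ := hF (k + 1)
      rw [e₁, e₂, card_union_of_disjoint d₁, card_union_of_disjoint d₂] at t₁
      have t₂ := hF k
      omega
  -- uncharged counts per level agree
  have hu : ∀ k : ℕ, (univ.filter fun i => ch₁ i = false ∧ lax₁ i = k).card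
      = (univ.filter fun i => ch₂ i = false ∧ lax₂ i = k).card := by
    intro k
    have e₁ : (univ.filter fun i => lax₁ i = k)
        = (univ.filter fun i => ch₁ i = true ∧ lax₁ i = k)
          ∪ (univ.filter fun i => ch₁ i = false ∧ lax₁ i = k) := by
      ext i; simp only [mem_filter, mem_univ, true_and, mem_union]
      cases h : ch₁ i <;> simp [h]
    have e₂ : (univ.filter fun i => lax₂ i = k)
        = (univ.filter fun i => ch₂ i = true ∧ lax₂ i = k)
          ∪ (univ.filter fun i => ch₂ i = false ∧ lax₂ i = k) := by
      ext i; simp only [mem_filter, mem_univ, true_and, mem_union]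
      cases h : ch₂ i <;> simp [h]
    have d₁ : Disjoint (univ.filter fun i => ch₁ i = true ∧ lax₁ i = k)
        (univ.filter fun i => ch₁ i = false ∧ lax₁ i = k) := by
      simp only [disjoint_left, mem_filter, mem_univ, true_and]
      rintro i ⟨h1, _⟩ ⟨h2, _⟩; simp [h1] at h2
    have d₂ : Disjoint (univ.filter fun i => ch₂ i = true ∧ lax₂ i = k)
        (univ.filter fun i => ch₂ i = false ∧ lax₂ i = k) := by
      simp only [disjoint_left, mem_filter, mem_univ, true_and]
      rintro i ⟨h1, _⟩ ⟨h2, _⟩; simp [h1] at h2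
    have t := hcounts k
    rw [e₁, e₂, card_union_of_disjoint d₁, card_union_of_disjoint d₂] at t
    have := hg k
    omega
  intro ℓ
  by_cases h0 : 0 ≤ ℓ
  · lift ℓ to ℕ using h0 with k
    have e₁ : (univ.filter fun i => lax₁' i = (k : ℤ))
        = (univ.filter fun i => ch₁ i = true ∧ lax₁ i = k)
          ∪ (univ.filter fun i => ch₁ i = false ∧ lax₁ i = k + 1) := by
      ext i
      simp only [mem_filter, mem_univ, true_and, mem_union, hdyn₁ i]
      cases h : ch₁ i <;> simp [h] <;> omega
    have e₂ : (univ.filter fun i => lax₂' i = (k : ℤ))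
        = (univ.filter fun i => ch₂ i = true ∧ lax₂ i = k)
          ∪ (univ.filter fun i => ch₂ i = false ∧ lax₂ i = k + 1) := by
      ext i
      simp only [mem_filter, mem_univ, true_and, mem_union, hdyn₂ i]
      cases h : ch₂ i <;> simp [h] <;> omega
    have d₁ : Disjoint (univ.filter fun i => ch₁ i = true ∧ lax₁ i = k)
        (univ.filter fun i => ch₁ i = false ∧ lax₁ i = k + 1) := by
      simp only [disjoint_left, mem_filter, mem_univ, true_and]
      rintro i ⟨h1, _⟩ ⟨h2, _⟩; simp [h1] at h2
    have d₂ : Disjoint (univ.filter fun i => ch₂ i = true ∧ lax₂ i = k)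
        (univ.filter fun i => ch₂ i = false ∧ lax₂ i = k + 1) := by
      simp only [disjoint_left, mem_filter, mem_univ, true_and]
      rintro i ⟨h1, _⟩ ⟨h2, _⟩; simp [h1] at h2
    rw [e₁, e₂, card_union_of_disjoint d₁, card_union_of_disjoint d₂, hg k, hu (k + 1)]
  · by_cases h1 : ℓ = -1
    · subst h1
      have e₁ : (univ.filter fun i => lax₁' i = (-1 : ℤ))
          = univ.filter fun i => ch₁ i = false ∧ lax₁ i = 0 := by
        ext i
        simp only [mem_filter, mem_univ, true_and, hdyn₁ i]
        cases h : ch₁ i <;> simp [h] <;> omega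
      have e₂ : (univ.filter fun i => lax₂' i = (-1 : ℤ))
          = univ.filter fun i => ch₂ i = false ∧ lax₂ i = 0 := by
        ext i
        simp only [mem_filter, mem_univ, true_and, hdyn₂ i]
        cases h : ch₂ i <;> simp [h] <;> omega
      rw [e₁, e₂, hu 0]
    · have e₁ : (univ.filter fun i => lax₁' i = ℓ) = ∅ := by
        ext i
        simp only [mem_filter, mem_univ, true_and, notMem_empty, iff_false, hdyn₁ i]
        cases h : ch₁ i <;> simp [h] <;> omega
      have e₂ : (univ.filter fun i => lax₂' i = ℓ) = ∅ := by
        ext i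
        simp only [mem_filter, mem_univ, true_and, notMem_empty, iff_false, hdyn₂ i]
        cases h : ch₂ i <;> simp [h] <;> omega
      rw [e₁, e₂]; rfl
end

section
/- If a Markov decision process aggregation φ: S → S' satisfies reward homogeneity (R(s,a) = R(s',a) whenever φ(s) = φ(s')) and dynamic homogeneity (the pushforward transition probabilities onto aggregated states agree: for all aggregated states u and all a, Σ_{s₁ : φ(s₁)=u} P(s₁ | s, a) = Σ_{s₁ : φ(s₁)=u} P(s₁ | s', a) whenever φ(s) = φ(s')), then for every policy π' defined on aggregated states, the value function of the lifted policy π = π' ∘ φ on the original MDP is constant on the fibers of φ: φ(s) = φ(s') implies V^π(s) = V^π(s'). -/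
open Finset in
/-- for a finite MDP with transition probabilities `P s a s₁`,
reward `R`, discount `γ`, and an aggregation `φ : S → S'` satisfying reward
homogeneity and dynamic homogeneity, the finite-horizon value function
(defined by the backward recursion) of any policy lifted from the aggregated
state space (`π = π' ∘ φ`) is constant on the fibers of `φ`. -/
theorem lifted_policy_value_constant_on_fibers
    (S S' A : Type*) [Fintype S] [DecidableEq S'] (φ : S → S')
    (P : S → A → S → ℝ) (R : S → A → ℝ) (γ : ℝ) (T : ℕ)
    (hRhom : ∀ s s', φ s = φ s' → ∀ a, R s a = R s' a)
    (hPhom : ∀ s s', φ s = φ s' → ∀ a (u : S'),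
      ∑ s₁ ∈ univ.filter (fun s₁ => φ s₁ = u), P s a s₁ =
        ∑ s₁ ∈ univ.filter (fun s₁ => φ s₁ = u), P s' a s₁)
    (π' : S' → A) (π : S → A) (hπ : ∀ s, π s = π' (φ s))
    (V : ℕ → S → ℝ)
    (hV0 : ∀ s, V 0 s = R s (π s))
    (hVrec : ∀ n s, V (n + 1) s = R s (π s) + γ * ∑ s₁, P s (π s) s₁ * V n s₁) :
    ∀ s s', φ s = φ s' → V T s = V T s' := by
  induction T with
  | zero =>
    intro s s' h
    rw [hV0, hV0, hπ, hπ, h, hRhom s s' h]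
  | succ n ih =>
    intro s s' h
    have hπss : π s = π s' := by rw [hπ, hπ, h]
    rw [hVrec, hVrec, hπss, hRhom s s' h]
    congr 2
    -- group sums over fibers of φ
    have key : ∀ t : S,
        ∑ s₁, P t (π s') s₁ * V n s₁ =
          ∑ u ∈ univ.image φ, ∑ s₁ ∈ univ.filter (fun s₁ => φ s₁ = u),
            P t (π s') s₁ * V n s₁ := by
      intro t
      exact (Finset.sum_fiberwise_of_maps_to (fun i _ => Finset.mem_image_of_mem φ
        (Finset.mem_univ i)) _).symm
    rw [key s, key s']
    refine Finset.sum_congr rfl fun u hu => ?_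
    obtain ⟨t, -, ht⟩ := Finset.mem_image.mp hu
    have hconst : ∀ s₁ ∈ univ.filter (fun s₁ => φ s₁ = u),
        P s (π s') s₁ * V n s₁ = P s (π s') s₁ * V n t := by
      intro s₁ hs₁
      have : φ s₁ = φ t := by rw [ht, (Finset.mem_filter.mp hs₁).2]
      rw [ih s₁ t this]
    have hconst' : ∀ s₁ ∈ univ.filter (fun s₁ => φ s₁ = u),
        P s' (π s') s₁ * V n s₁ = P s' (π s') s₁ * V n t := by
      intro s₁ hs₁
      have : φ s₁ = φ t := by rw [ht, (Finset.mem_filter.mp hs₁).2]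
      rw [ih s₁ t this]
    rw [Finset.sum_congr rfl hconst, Finset.sum_congr rfl hconst',
      ← Finset.sum_mul, ← Finset.sum_mul, hPhom s s' h (π s') u]
end

section
/- Under the equivalent aggregation (reward and dynamic homogeneity), the optimal value functions agree: for every state s of the original MDP, V*(s) = V'*(φ(s)), where V'* is the optimal value of the aggregated MDP whose transition from aggregated state u under action a is the common pushforward distribution and whose reward is the common reward on each fiber. -/
open Finset in
/-- under an equivalent aggregation `φ : S → S'` (surjective,
with reward homogeneity `R s a = R' (φ s) a` and dynamic homogeneity
`∑_{s₁ : φ s₁ = u} P s a s₁ = P' (φ s) a u`), the finite-horizon optimal value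
functions of the original and the aggregated MDP (defined by backward
recursions with suprema over actions) agree: `V* T s = V'* T (φ s)` for every
state `s`. -/
theorem optimal_values_agree_under_aggregation
    (S S' A : Type*) [Fintype S] [Fintype S'] [Fintype A] [Nonempty A]
    [DecidableEq S'] (φ : S → S') (hsurj : Function.Surjective φ)
    (P : S → A → S → ℝ) (R : S → A → ℝ)
    (P' : S' → A → S' → ℝ) (R' : S' → A → ℝ) (γ : ℝ) (T : ℕ)
    (hprob : ∀ s a, (∀ s₁, 0 ≤ P s a s₁) ∧ ∑ s₁, P s a s₁ = 1)
    (hR : ∀ s a, R s a = R' (φ s) a)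
    (hP : ∀ s a (u : S'),
      ∑ s₁ ∈ univ.filter (fun s₁ => φ s₁ = u), P s a s₁ = P' (φ s) a u)
    (V : ℕ → S → ℝ) (V' : ℕ → S' → ℝ)
    (hV0 : ∀ s, V 0 s = ⨆ a, R s a)
    (hVrec : ∀ n s, V (n + 1) s = ⨆ a, (R s a + γ * ∑ s₁, P s a s₁ * V n s₁))
    (hV'0 : ∀ u, V' 0 u = ⨆ a, R' u a)
    (hV'rec : ∀ n u, V' (n + 1) u = ⨆ a, (R' u a + γ * ∑ u₁, P' u a u₁ * V' n u₁)) :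
    ∀ s, V T s = V' T (φ s) := by
  induction T with
  | zero =>
    intro s
    rw [hV0, hV'0]
    exact iSup_congr fun a => hR s a
  | succ n ih =>
    intro s
    rw [hVrec, hV'rec]
    refine iSup_congr fun a => ?_
    rw [hR]
    congr 2
    calc ∑ s₁, P s a s₁ * V n s₁
        = ∑ s₁, P s a s₁ * V' n (φ s₁) := by
          exact Finset.sum_congr rfl fun s₁ _ => by rw [ih s₁]
      _ = ∑ u, ∑ s₁ ∈ univ.filter (fun s₁ => φ s₁ = u),
            P s a s₁ * V' n (φ s₁) := by
          rw [Finset.sum_fiberwise]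
      _ = ∑ u, P' (φ s) a u * V' n u := by
          refine Finset.sum_congr rfl fun u _ => ?_
          rw [← hP s a u, Finset.sum_mul]
          exact Finset.sum_congr rfl fun s₁ hs₁ => by
            rw [(Finset.mem_filter.mp hs₁).2]
end

section
/- With all EVs present at time 0, the least-laxity-first rule with per-slot capacity c (charge the up-to-c EVs with positive remaining demand and smallest current laxity) produces a feasible schedule whenever any feasible schedule exists. -/
/-!
Call remaining demands `r` at slot `t` admissible if every EV can still be served one unit
per slot, `r i ≤ τ i - t`, and for every horizon `T` the load before `T`, i.e. the units
`∑ i, (r i - (τ i - T))` that must be delivered before `T`, fits into the `c * (T - t)`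
available ones. A feasible schedule makes the initial demands admissible, and at the deadline
`τ i` admissibility says that EV `i` is fully charged, so it suffices that one LLF slot
preserves admissibility.

If an active EV of zero laxity were left uncharged, the capacity would be exhausted by `c`
EVs of laxity at most zero, and these `c + 1` zero-laxity EVs would need `c + 1` units per slot
until the earliest of their deadlines. For the load before `T`: an uncharged EV with positive
load has laxity below `T - t`, so it forces every charged EV to have positive load too. Hence
either `c` units of the load are delivered in slot `t`, or all loaded EVs are charged, and then
the load is at most `#charged * (T - t)` and drops by `#charged`.
-/

open Finset

namespace LLF

theorem sum_range_le_sum_range_add {f : ℕ → ℕ} (hf : ∀ s, f s ≤ 1) (m n : ℕ) :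
    ∑ s ∈ range n, f s ≤ ∑ s ∈ range m, f s + (n - m) := by
  rcases le_total n m with hnm | hmn
  · exact (sum_le_sum_of_subset (range_subset_range.2 hnm)).trans (Nat.le_add_right _ _)
  · rw [← sum_range_add_sum_Ico f hmn]
    gcongr
    simpa using sum_le_card_nsmul (Ico m n) f 1 fun s _ => hf s

variable {ι : Type*}

abbrev Active (d τ : ι → ℕ) (b : ι → ℕ → ℕ) (t : ℕ) (i : ι) : Prop :=
  t < τ i ∧ ∑ s ∈ range t, b i s < d i

def remaining (d : ι → ℕ) (b : ι → ℕ → ℕ) (t : ℕ) (i : ι) : ℕ :=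
  d i - ∑ s ∈ range t, b i s

theorem active_iff_remaining_pos {d τ : ι → ℕ} {b : ι → ℕ → ℕ} {t : ℕ} {i : ι} :
    Active d τ b t i ↔ t < τ i ∧ 0 < remaining d b t i := by
  simp [remaining]

variable [Fintype ι]

def Admissible (c : ℕ) (τ r : ι → ℕ) (t : ℕ) : Prop :=
  (∀ i, r i ≤ τ i - t) ∧ ∀ T, ∑ i, (r i - (τ i - T)) ≤ c * (T - t)

theorem admissible_zero_of_schedule {c : ℕ} {d τ : ι → ℕ} (σ : ι → ℕ → ℕ)
    (hσ_le : ∀ i t, σ i t ≤ 1) (hσ_sum : ∀ t, ∑ i, σ i t ≤ c)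
    (hσ_dem : ∀ i, d i ≤ ∑ t ∈ range (τ i), σ i t) :
    Admissible c τ d 0 := by
  refine ⟨fun i => ?_, fun T => ?_⟩
  · simpa using (hσ_dem i).trans (sum_range_le_sum_range_add (hσ_le i) 0 (τ i))
  · calc ∑ i, (d i - (τ i - T)) ≤ ∑ i, ∑ s ∈ range T, σ i s := by
          gcongr with i
          have := (hσ_dem i).trans (sum_range_le_sum_range_add (hσ_le i) T (τ i))
          omega
      _ = ∑ s ∈ range T, ∑ i, σ i s := sum_comm
      _ ≤ ∑ _s ∈ range T, c := sum_le_sum fun s _ => hσ_sum s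
      _ = c * (T - 0) := by simp [mul_comm]

theorem Admissible.card_le_of_tight {c : ℕ} {τ r : ι → ℕ} {t : ℕ}
    (h : Admissible c τ r t) (Z : Finset ι) (hZ : ∀ j ∈ Z, t < τ j ∧ r j = τ j - t) :
    #Z ≤ c := by
  rcases Z.eq_empty_or_nonempty with rfl | hne
  · simp
  obtain ⟨j₀, hj₀, hmin⟩ := Z.exists_min_image τ hne
  have ht : t < τ j₀ := (hZ j₀ hj₀).1
  refine Nat.le_of_mul_le_mul_right (c := τ j₀ - t) ?_ (by omega)
  calc #Z * (τ j₀ - t) = ∑ _j ∈ Z, (τ j₀ - t) := by rw [sum_const, smul_eq_mul]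
    _ ≤ ∑ j ∈ Z, (r j - (τ j - τ j₀)) := sum_le_sum fun j hj => by
        have := hZ j hj; have := hmin j hj; omega
    _ ≤ ∑ j, (r j - (τ j - τ j₀)) := sum_le_sum_of_subset (subset_univ Z)
    _ ≤ c * (τ j₀ - t) := h.2 _

structure IsLLF (c : ℕ) (d τ : ι → ℕ) (b : ι → ℕ → ℕ) : Prop where
  le_one : ∀ i t, b i t ≤ 1
  active : ∀ i t, 0 < b i t → Active d τ b t i
  sum_eq_min : ∀ t, ∑ i, b i t = min c #(univ.filter (Active d τ b t))
  laxity_le : ∀ t i i', Active d τ b t i → b i t = 0 → b i' t = 1 →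
      ((τ i' : ℤ) - t) - ((d i' : ℤ) - ∑ s ∈ range t, (b i' s : ℤ)) ≤
        ((τ i : ℤ) - t) - ((d i : ℤ) - ∑ s ∈ range t, (b i s : ℤ))

namespace IsLLF

variable {c : ℕ} {d τ : ι → ℕ} {b : ι → ℕ → ℕ} {t : ℕ}

theorem sum_range_le (h : IsLLF c d τ b) (i : ι) (t : ℕ) :
    ∑ s ∈ range t, b i s ≤ d i := by
  induction t with
  | zero => simp
  | succ t ih =>
    rw [sum_range_succ]
    rcases Nat.eq_zero_or_pos (b i t) with hzero | hpos
    · omega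
    · have := (h.active i t hpos).2; have := h.le_one i t; omega

theorem remaining_eq_succ_add (h : IsLLF c d τ b) (i : ι) (t : ℕ) :
    remaining d b t i = remaining d b (t + 1) i + b i t := by
  have := h.sum_range_le i (t + 1)
  rw [sum_range_succ] at this
  simp only [remaining, sum_range_succ]
  omega

theorem laxity_remaining_le (h : IsLLF c d τ b) {i j : ι} (hj : Active d τ b t j)
    (hbj : b j t = 0) (hbi : b i t = 1) :
    ((τ i : ℤ) - t) - remaining d b t i ≤ ((τ j : ℤ) - t) - remaining d b t j := by
  have := h.laxity_le t j i hj hbj hbi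
  simp only [remaining, Nat.cast_sub (h.sum_range_le _ t), Nat.cast_sum]
  exact this

theorem card_charged (h : IsLLF c d τ b) (t : ℕ) :
    #(univ.filter fun i => b i t = 1) = min c #(univ.filter (Active d τ b t)) := by
  rw [← h.sum_eq_min t, card_filter]
  exact sum_congr rfl fun i _ => by have := h.le_one i t; split_ifs <;> omega

theorem card_charged_eq (h : IsLLF c d τ b) {j : ι} (hj : Active d τ b t j) (hbj : b j t = 0) :
    #(univ.filter fun i => b i t = 1) = c := by
  have hsub : (univ.filter fun i => b i t = 1) ⊂ univ.filter (Active d τ b t) :=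
    ⟨fun i hi => mem_filter.2 ⟨mem_univ i, h.active i t (by rw [(mem_filter.1 hi).2]; simp)⟩,
      fun hsub => by
        simpa [hbj] using (mem_filter.1 (hsub (mem_filter.2 ⟨mem_univ j, hj⟩))).2⟩
  have := card_lt_card hsub
  rw [h.card_charged t] at this ⊢
  omega

theorem charged_of_tight (h : IsLLF c d τ b) (hadm : Admissible c τ (remaining d b t) t)
    {i : ι} (hi : Active d τ b t i) (htight : remaining d b t i = τ i - t) : b i t = 1 := by
  by_contra hbi
  have hbi0 : b i t = 0 := by have := h.le_one i t; omega
  have hiS : i ∉ univ.filter fun j => b j t = 1 := by simp [hbi0]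
  have := hadm.card_le_of_tight ((univ.filter fun j => b j t = 1).cons i hiS) fun j hj => by
    rcases mem_cons.1 hj with rfl | hjS
    · exact ⟨hi.1, htight⟩
    · have hbj : b j t = 1 := (mem_filter.1 hjS).2
      have := h.laxity_remaining_le hi hbi0 hbj
      have := (h.active j t (by omega)).1
      have := hadm.1 j
      omega
  rw [card_cons, h.card_charged_eq hi hbi0] at this
  omega

theorem remaining_succ_le (h : IsLLF c d τ b) (hadm : Admissible c τ (remaining d b t) t)
    (i : ι) : remaining d b (t + 1) i ≤ τ i - (t + 1) := by
  have hrec := h.remaining_eq_succ_add i t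
  have hle := hadm.1 i
  have := h.le_one i t
  by_cases htight : t < τ i ∧ 0 < remaining d b t i ∧ remaining d b t i = τ i - t
  · have := h.charged_of_tight hadm (active_iff_remaining_pos.2 ⟨htight.1, htight.2.1⟩)
      htight.2.2
    omega
  · omega

theorem load_pos_of_charged (h : IsLLF c d τ b) (hadm : Admissible c τ (remaining d b t) t)
    {T : ℕ} {i j : ι} (hi : 0 < remaining d b t i - (τ i - T)) (hbi : b i t = 0)
    (hbj : b j t = 1) : 0 < remaining d b t j - (τ j - T) := by
  have hi_act : Active d τ b t i :=
    active_iff_remaining_pos.2 ⟨by have := hadm.1 i; omega, by omega⟩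
  have := h.laxity_remaining_le hi_act hbi hbj
  have := active_iff_remaining_pos.1 (h.active j t (by omega))
  omega

theorem charged_of_load_pos (h : IsLLF c d τ b) (hadm : Admissible c τ (remaining d b t) t)
    {T : ℕ} (hlt : #(univ.filter fun j => b j t = 1 ∧ 0 < remaining d b t j - (τ j - T)) < c)
    {i : ι} (hi : 0 < remaining d b t i - (τ i - T)) : b i t = 1 := by
  by_contra hbi
  have hbi0 : b i t = 0 := by have := h.le_one i t; omega
  have hact : Active d τ b t i :=
    active_iff_remaining_pos.2 ⟨by have := hadm.1 i; omega, by omega⟩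
  have hsub : (univ.filter fun j => b j t = 1) ⊆
      univ.filter fun j => b j t = 1 ∧ 0 < remaining d b t j - (τ j - T) := fun j hj =>
    mem_filter.2 ⟨mem_univ j, (mem_filter.1 hj).2,
      h.load_pos_of_charged hadm hi hbi0 (mem_filter.1 hj).2⟩
  have := card_le_card hsub
  rw [h.card_charged_eq hact hbi0] at this
  omega

theorem load_succ_le (h : IsLLF c d τ b) (hadm : Admissible c τ (remaining d b t) t)
    (T : ℕ) : ∑ i, (remaining d b (t + 1) i - (τ i - T)) ≤ c * (T - (t + 1)) := by
  rcases le_or_gt T (t + 1) with hT | hT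
  · have hzero : ∀ i, remaining d b (t + 1) i - (τ i - T) = 0 := fun i => by
      have := h.remaining_succ_le hadm i; omega
    simp [hzero]
  set S := univ.filter fun i => b i t = 1
  set P := univ.filter fun i => b i t = 1 ∧ 0 < remaining d b t i - (τ i - T)
  have hdrop : ∑ i, (remaining d b t i - (τ i - T))
      = ∑ i, (remaining d b (t + 1) i - (τ i - T)) + #P := by
    rw [card_filter, ← sum_add_distrib]
    refine sum_congr rfl fun i _ => ?_
    have := h.remaining_eq_succ_add i t
    have := h.le_one i t
    split_ifs <;> omega
  have hPS : P ⊆ S := monotone_filter_right _ fun i _ hi => hi.1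
  have hS : #S ≤ c := (h.card_charged t).trans_le (min_le_left _ _)
  have hsplit : T - t = T - (t + 1) + 1 := by omega
  rcases (card_le_card hPS |>.trans hS).lt_or_eq with hlt | heq
  · have hcover : ∀ i, 0 < remaining d b t i - (τ i - T) → i ∈ P := fun i hi =>
      mem_filter.2 ⟨mem_univ i, h.charged_of_load_pos hadm hlt hi, hi⟩
    have hload : ∑ i, (remaining d b t i - (τ i - T)) ≤ #P * (T - t) := calc
      _ = ∑ i ∈ P, (remaining d b t i - (τ i - T)) :=
          (sum_subset (subset_univ P) fun i _ hi => by
            by_contra hne; exact hi (hcover i (Nat.pos_of_ne_zero hne))).symm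
      _ ≤ ∑ _i ∈ P, (T - t) := sum_le_sum fun i _ => by have := hadm.1 i; omega
      _ = #P * (T - t) := by rw [sum_const, smul_eq_mul]
    have := Nat.mul_le_mul_right (T - (t + 1)) hlt.le
    rw [hsplit, mul_add, mul_one] at hload
    omega
  · have := hadm.2 T
    rw [hsplit, mul_add, mul_one] at this
    omega

theorem admissible_remaining (h : IsLLF c d τ b) (h₀ : Admissible c τ d 0) :
    ∀ t, Admissible c τ (remaining d b t) t
  | 0 => by rwa [show remaining d b 0 = d from funext fun i => by simp [remaining]]
  | t + 1 =>
    have hadm := admissible_remaining h h₀ t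
    ⟨h.remaining_succ_le hadm, h.load_succ_le hadm⟩

end IsLLF

end LLF

open Finset in
theorem llf_capacity_feasible_general
    (ι : Type*) [Fintype ι]
    (d τ : ι → ℕ) (c : ℕ)
    (hexists : ∃ σ : ι → ℕ → ℕ,
      (∀ i t, σ i t ≤ 1) ∧
      (∀ t, ∑ i, σ i t ≤ c) ∧
      (∀ i t, τ i ≤ t → σ i t = 0) ∧
      (∀ i, d i ≤ ∑ t ∈ range (τ i), σ i t))
    (b : ι → ℕ → ℕ)
    (hb_bin : ∀ i t, b i t ≤ 1)
    (hb_act : ∀ i t, 0 < b i t → t < τ i ∧ ∑ s ∈ range t, b i s < d i)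
    (hb_full : ∀ t, ∑ i, b i t =
      min c ((univ.filter fun i => t < τ i ∧ ∑ s ∈ range t, b i s < d i).card))
    (hb_llf : ∀ t i i',
      (t < τ i ∧ ∑ s ∈ range t, b i s < d i) → b i t = 0 → b i' t = 1 →
      ((τ i' : ℤ) - t) - ((d i' : ℤ) - ∑ s ∈ range t, (b i' s : ℤ)) ≤
        ((τ i : ℤ) - t) - ((d i : ℤ) - ∑ s ∈ range t, (b i s : ℤ))) :
    ∀ i, d i ≤ ∑ t ∈ range (τ i), b i t := by
  obtain ⟨σ, hσ_le, hσ_sum, -, hσ_dem⟩ := hexists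
  have hb : LLF.IsLLF c d τ b := ⟨hb_bin, hb_act, hb_full, hb_llf⟩
  intro i
  have h₀ := LLF.admissible_zero_of_schedule σ hσ_le hσ_sum hσ_dem
  have hdone := (hb.admissible_remaining h₀ (τ i)).1 i
  simp only [LLF.remaining] at hdone
  omega

open Finset in
/-- LLF with per-slot capacity `c` is feasibility-preserving:
all EVs present at time 0, EV `i` with demand `d i` and deadline `τ i`
(`d i ≤ τ i`).  If some feasible schedule exists (binary, at most `c` charged
per slot, nobody charged after its deadline, everyone fully charged by its
deadline), then any least-laxity-first schedule `b` — one that charges exactly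
`min c (#active)` active EVs per slot (active: positive remaining demand and
before the deadline), only active EVs, with charged EVs having laxity no larger
than any uncharged active EV — is feasible. -/
theorem llf_capacity_feasible
    (ι : Type*) [Fintype ι] [DecidableEq ι]
    (d τ : ι → ℕ) (hdτ : ∀ i, d i ≤ τ i) (c : ℕ)
    (hexists : ∃ σ : ι → ℕ → ℕ,
      (∀ i t, σ i t ≤ 1) ∧
      (∀ t, ∑ i, σ i t ≤ c) ∧
      (∀ i t, τ i ≤ t → σ i t = 0) ∧
      (∀ i, d i ≤ ∑ t ∈ range (τ i), σ i t))
    (b : ι → ℕ → ℕ)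
    (hb_bin : ∀ i t, b i t ≤ 1)
    (hb_act : ∀ i t, 0 < b i t → t < τ i ∧ ∑ s ∈ range t, b i s < d i)
    (hb_full : ∀ t, ∑ i, b i t =
      min c ((univ.filter fun i => t < τ i ∧ ∑ s ∈ range t, b i s < d i).card))
    (hb_llf : ∀ t i i',
      (t < τ i ∧ ∑ s ∈ range t, b i s < d i) → b i t = 0 → b i' t = 1 →
      ((τ i' : ℤ) - t) - ((d i' : ℤ) - ∑ s ∈ range t, (b i' s : ℤ)) ≤
        ((τ i : ℤ) - t) - ((d i : ℤ) - ∑ s ∈ range t, (b i s : ℤ))) :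
    ∀ i, d i ≤ ∑ t ∈ range (τ i), b i t :=
  llf_capacity_feasible_general ι d τ c hexists b hb_bin hb_act hb_full hb_llf
end
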